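/- Let d ≥ 1 and ϑ ≥ 0. Define the Hermite semigroup operator R_ϑ on 𝒮(ℝ^d) by R_ϑ f(x) = cosh(ϑ)^{−d/2} ∫_{ℝ^d} 𝓕f(η) exp(−π tanh(ϑ)(|x|² + |η|²)) exp(2πi x·η / cosh(ϑ)) dη, and let g(t) = e^{−π|t|²}. Then for all z, w ∈ ℝ^{2d}, the modulus of the Gabor matrix of R_ϑ equals |⟨R_ϑ π(z)g, π(w)g⟩_{L²(ℝ^d)}| = 2^{−d/2} e^{−dϑ/2} exp(−(π/4)(1 + e^{−ϑ})|z − w|²) exp(−(π/4)(1 − e^{−ϑ})|z + w|²). Equivalently, |⟨R_ϑ π(z)g, π(w)g⟩| = 2^{−d/2} e^{−dϑ/2} exp(−(π/2)(|z|² + |w|²) + π e^{−ϑ} z·w). (R_ϑ with ϑ = 2t is the propagator e^{t((1/(2π))Δ − 2π|x|²)} of the Hermite heat equation; for ϑ = 0 this reduces to the Gaussian overlap formula.) -/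

import Mathlib

open MeasureTheory Complex
open scoped Real

noncomputable section

variable {d : ℕ}

/-- Fourier transform `𝓕f(ξ) = ∫ f(x) e^{−2πi x·ξ} dx`. -/
def fourierTf (f : EuclideanSpace ℝ (Fin d) → ℂ) (ξ : EuclideanSpace ℝ (Fin d)) : ℂ :=
  ∫ x, f x * Complex.exp (-(2 * π * (inner ℝ x ξ : ℝ)) * Complex.I)

/-- The Hermite semigroup operator
`R_ϑ f(x) = cosh(ϑ)^{−d/2} ∫ 𝓕f(η) e^{−π tanh(ϑ)(|x|²+|η|²)} e^{2πi x·η/cosh(ϑ)} dη`. -/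
def hermiteSemigroup (ϑ : ℝ) (f : EuclideanSpace ℝ (Fin d) → ℂ)
    (x : EuclideanSpace ℝ (Fin d)) : ℂ :=
  ((Real.cosh ϑ ^ (-(d : ℝ) / 2) : ℝ) : ℂ) *
    ∫ η, fourierTf f η *
      Complex.exp (-(π * Real.tanh ϑ * (‖x‖ ^ 2 + ‖η‖ ^ 2) : ℝ)) *
      Complex.exp ((2 * π * (inner ℝ x η : ℝ) / Real.cosh ϑ) * Complex.I)

/-- Time–frequency shift `π(z)f(t) = e^{2πi z₂·t} f(t − z₁)`. -/
def tfShift (z : EuclideanSpace ℝ (Fin d) × EuclideanSpace ℝ (Fin d))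
    (f : EuclideanSpace ℝ (Fin d) → ℂ) (t : EuclideanSpace ℝ (Fin d)) : ℂ :=
  Complex.exp ((2 * π * (inner ℝ z.2 t : ℝ)) * Complex.I) * f (t - z.1)

/-- Gaussian window `g(t) = e^{−π|t|²}`. -/
def gaussWin (t : EuclideanSpace ℝ (Fin d)) : ℂ :=
  (Real.exp (-π * ‖t‖ ^ 2) : ℝ)

/-! The Fourier transform of a coherent state `π(z)g` is a Gaussian, and one more Gaussian
integral (completing the square) shows that `R_ϑ` maps coherent states to coherent states:
`R_ϑ π(z)g = e^{-dϑ/2} e^{-π(1-e^{-2ϑ})|z|²/2} e^{iπ(1-e^{-2ϑ}) z₁·z₂} π(e^{-ϑ}z)g`.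
The Gabor matrix is therefore a multiple of the overlap of the coherent states at `e^{-ϑ}z`
and `w`, and `|⟨π(u)g, π(w)g⟩| = 2^{-d/2} e^{-π|u-w|²/2}`; expanding `|e^{-ϑ}z - w|²` gives
the claim. -/

open scoped RealInnerProductSpace

lemma Real.cosh_mul_one_add_tanh (x : ℝ) : Real.cosh x * (1 + Real.tanh x) = Real.exp x := by
  rw [Real.tanh_eq_sinh_div_cosh, mul_add, mul_one, mul_div_cancel₀ _ (Real.cosh_pos x).ne',
    Real.cosh_add_sinh]

lemma Complex.norm_exp_ofReal_add_ofReal_mul_I (x y : ℝ) : ‖cexp (x + y * I)‖ = Real.exp x := by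
  simp [Complex.norm_exp]

section Gaussian

variable {V : Type*} [NormedAddCommGroup V] [InnerProductSpace ℝ V] [FiniteDimensional ℝ V]
  [MeasurableSpace V] [BorelSpace V]

theorem integral_cexp_neg_mul_sq_norm_add_inner_add_inner_mul_I {b : ℝ} (hb : 0 < b)
    (a c : V) (p q : ℝ) :
    ∫ v : V, cexp (((-b * ‖v‖ ^ 2 + ⟪a, v⟫ + p : ℝ) : ℂ) + ((⟪c, v⟫ + q : ℝ) : ℂ) * I) =
      (((π / b) ^ (Module.finrank ℝ V / 2 : ℝ) : ℝ) : ℂ) *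
        cexp ((((‖a‖ ^ 2 - ‖c‖ ^ 2) / (4 * b) + p : ℝ) : ℂ) +
          ((⟪a, c⟫ / (2 * b) + q : ℝ) : ℂ) * I) := by
  have hb' : (b : ℂ) ≠ 0 := by exact_mod_cast hb.ne'
  -- the shift by `a / 2b` completes the square and removes the real linear term
  have hshift : ∀ v : V,
      cexp (((-b * ‖v + (2 * b)⁻¹ • a‖ ^ 2 + ⟪a, v + (2 * b)⁻¹ • a⟫ + p : ℝ) : ℂ) +
          ((⟪c, v + (2 * b)⁻¹ • a⟫ + q : ℝ) : ℂ) * I) =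
        cexp (-(b : ℂ) * ‖v‖ ^ 2 + I * ⟪c, v⟫) *
          cexp ((‖a‖ ^ 2 / (4 * b) + p : ℝ) + ((⟪a, c⟫ / (2 * b) + q : ℝ) : ℂ) * I) := by
    intro v
    rw [← Complex.exp_add]
    congr 1
    simp only [norm_add_sq_real, inner_add_right, inner_smul_right, norm_smul,
      real_inner_self_eq_norm_sq, real_inner_comm a c, real_inner_comm a v]
    rw [Real.norm_of_nonneg (by positivity)]
    push_cast
    field_simp
    ring
  rw [← integral_add_right_eq_self _ ((2 * b)⁻¹ • a)]
  simp only [hshift, integral_mul_const]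
  rw [GaussianFourier.integral_cexp_neg_mul_sq_norm_add (by simpa using hb),
    Complex.ofReal_cpow (by positivity), mul_assoc, ← Complex.exp_add]
  push_cast
  congr 2
  rw [I_sq]
  field_simp
  ring

end Gaussian

lemma tfShift_gaussWin_apply (z : EuclideanSpace ℝ (Fin d) × EuclideanSpace ℝ (Fin d))
    (t : EuclideanSpace ℝ (Fin d)) :
    tfShift z gaussWin t =
      cexp (((-π * ‖t - z.1‖ ^ 2 : ℝ) : ℂ) + ((2 * π * ⟪z.2, t⟫ : ℝ) : ℂ) * I) := by
  rw [tfShift, gaussWin, Complex.ofReal_exp, ← Complex.exp_add, add_comm]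
  push_cast
  ring_nf

theorem fourierTf_tfShift_gaussWin (z : EuclideanSpace ℝ (Fin d) × EuclideanSpace ℝ (Fin d))
    (η : EuclideanSpace ℝ (Fin d)) :
    fourierTf (tfShift z gaussWin) η =
      cexp (((-π * ‖η - z.2‖ ^ 2 : ℝ) : ℂ) + ((2 * π * ⟪z.1, z.2 - η⟫ : ℝ) : ℂ) * I) := by
  have hintegrand : ∀ t : EuclideanSpace ℝ (Fin d),
      tfShift z gaussWin t * cexp (-(2 * π * ⟪t, η⟫) * I) =
        cexp (((-π * ‖t‖ ^ 2 + ⟪(2 * π) • z.1, t⟫ + -π * ‖z.1‖ ^ 2 : ℝ) : ℂ) +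
          ((⟪(2 * π) • (z.2 - η), t⟫ + 0 : ℝ) : ℂ) * I) := by
    intro t
    rw [tfShift_gaussWin_apply, ← Complex.exp_add]
    congr 1
    simp only [norm_sub_sq_real, real_inner_smul_left, inner_sub_left, real_inner_comm t z.1,
      real_inner_comm t z.2, real_inner_comm t η]
    push_cast
    ring
  rw [fourierTf, integral_congr_ae (Filter.Eventually.of_forall hintegrand),
    integral_cexp_neg_mul_sq_norm_add_inner_add_inner_mul_I Real.pi_pos,
    div_self Real.pi_ne_zero, Real.one_rpow, Complex.ofReal_one, one_mul]
  congr 1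
  simp only [norm_smul, mul_pow, norm_sub_sq_real, real_inner_smul_left, real_inner_smul_right,
    inner_sub_right, real_inner_comm η, Real.norm_of_nonneg Real.two_pi_pos.le]
  push_cast
  field_simp
  ring

theorem hermiteSemigroup_tfShift_gaussWin (ϑ : ℝ)
    (z : EuclideanSpace ℝ (Fin d) × EuclideanSpace ℝ (Fin d)) (s : EuclideanSpace ℝ (Fin d)) :
    hermiteSemigroup ϑ (tfShift z gaussWin) s =
      (Real.exp (-d * ϑ / 2) : ℂ) *
        cexp (((-(π / 2) * (1 - Real.exp (-ϑ) ^ 2) * (‖z.1‖ ^ 2 + ‖z.2‖ ^ 2) : ℝ) : ℂ) +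
          ((π * (1 - Real.exp (-ϑ) ^ 2) * ⟪z.1, z.2⟫ : ℝ) : ℂ) * I) *
        tfShift (Real.exp (-ϑ) • z) gaussWin s := by
  have hcosh : 0 < Real.cosh ϑ := Real.cosh_pos ϑ
  have htanh : 0 < 1 + Real.tanh ϑ := by
    nlinarith [Real.cosh_mul_one_add_tanh ϑ, Real.exp_pos ϑ]
  have hintegrand : ∀ η : EuclideanSpace ℝ (Fin d),
      fourierTf (tfShift z gaussWin) η *
          Complex.exp (-(π * Real.tanh ϑ * (‖s‖ ^ 2 + ‖η‖ ^ 2) : ℝ)) *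
          Complex.exp ((2 * π * (⟪s, η⟫ : ℝ) / Real.cosh ϑ) * Complex.I) =
        cexp (((-(π * (1 + Real.tanh ϑ)) * ‖η‖ ^ 2 + ⟪(2 * π) • z.2, η⟫ +
              (-π * ‖z.2‖ ^ 2 - π * Real.tanh ϑ * ‖s‖ ^ 2) : ℝ) : ℂ) +
          ((⟪(2 * π) • ((Real.cosh ϑ)⁻¹ • s - z.1), η⟫ + 2 * π * ⟪z.1, z.2⟫ : ℝ) : ℂ) * I) := by
    intro η
    rw [fourierTf_tfShift_gaussWin, ← Complex.exp_add, ← Complex.exp_add]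
    congr 1
    simp only [norm_sub_sq_real, real_inner_smul_left, inner_sub_left, inner_sub_right,
      real_inner_comm η z.2, real_inner_comm η z.1, real_inner_comm η s]
    push_cast
    field_simp
    ring
  rw [hermiteSemigroup, integral_congr_ae (Filter.Eventually.of_forall hintegrand),
    integral_cexp_neg_mul_sq_norm_add_inner_add_inner_mul_I (by positivity),
    tfShift_gaussWin_apply, mul_assoc _ (cexp _), ← Complex.exp_add, ← mul_assoc,
    ← Complex.ofReal_mul]
  congr 2
  · rw [finrank_euclideanSpace_fin, div_mul_cancel_left₀ Real.pi_ne_zero,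
      Real.inv_rpow htanh.le, ← Real.rpow_neg htanh.le, neg_div,
      ← Real.mul_rpow hcosh.le htanh.le, Real.cosh_mul_one_add_tanh, ← Real.exp_mul]
    ring_nf
  · have hexp : Real.exp ϑ = (Real.exp (-ϑ))⁻¹ := by rw [Real.exp_neg, inv_inv]
    have hq := Real.exp_pos (-ϑ)
    have hre : (‖(2 * π) • z.2‖ ^ 2 - ‖(2 * π) • ((Real.cosh ϑ)⁻¹ • s - z.1)‖ ^ 2) /
          (4 * (π * (1 + Real.tanh ϑ))) + (-π * ‖z.2‖ ^ 2 - π * Real.tanh ϑ * ‖s‖ ^ 2) =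
        -(π / 2) * (1 - Real.exp (-ϑ) ^ 2) * (‖z.1‖ ^ 2 + ‖z.2‖ ^ 2) +
          -π * ‖s - (Real.exp (-ϑ) • z).1‖ ^ 2 := by
      simp only [Prod.smul_fst, norm_smul, mul_pow, norm_sub_sq_real, real_inner_smul_left,
        real_inner_smul_right, Real.norm_of_nonneg Real.two_pi_pos.le,
        Real.norm_of_nonneg (inv_pos.2 hcosh).le, Real.norm_of_nonneg hq.le]
      rw [Real.tanh_eq, Real.cosh_eq, hexp]
      field_simp
      ring
    have him : ⟪(2 * π) • z.2, (2 * π) • ((Real.cosh ϑ)⁻¹ • s - z.1)⟫ /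
          (2 * (π * (1 + Real.tanh ϑ))) + 2 * π * ⟪z.1, z.2⟫ =
        π * (1 - Real.exp (-ϑ) ^ 2) * ⟪z.1, z.2⟫ + 2 * π * ⟪(Real.exp (-ϑ) • z).2, s⟫ := by
      simp only [Prod.smul_snd, real_inner_smul_left, real_inner_smul_right, inner_sub_right,
        real_inner_comm z.1 z.2]
      rw [Real.tanh_eq, Real.cosh_eq, hexp]
      field_simp
      ring
    rw [hre, him]
    push_cast
    ring
theorem norm_integral_tfShift_gaussWin_mul_conj
    (u w : EuclideanSpace ℝ (Fin d) × EuclideanSpace ℝ (Fin d)) :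
    ‖∫ s, tfShift u gaussWin s * starRingEnd ℂ (tfShift w gaussWin s)‖ =
      (2 : ℝ) ^ (-(d : ℝ) / 2) * Real.exp (-(π / 2) * (‖u.1 - w.1‖ ^ 2 + ‖u.2 - w.2‖ ^ 2)) := by
  have hintegrand : ∀ s : EuclideanSpace ℝ (Fin d),
      tfShift u gaussWin s * starRingEnd ℂ (tfShift w gaussWin s) =
        cexp (((-(2 * π) * ‖s‖ ^ 2 + ⟪(2 * π) • (u.1 + w.1), s⟫ + -π * (‖u.1‖ ^ 2 + ‖w.1‖ ^ 2)
            : ℝ) : ℂ) + ((⟪(2 * π) • (u.2 - w.2), s⟫ + 0 : ℝ) : ℂ) * I) := by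
    intro s
    rw [tfShift_gaussWin_apply, tfShift_gaussWin_apply, ← Complex.exp_conj, ← Complex.exp_add]
    congr 1
    simp only [map_add, map_mul, Complex.conj_ofReal, Complex.conj_I, norm_sub_sq_real,
      real_inner_smul_right, inner_add_right, inner_sub_right, real_inner_comm s]
    push_cast
    ring
  rw [integral_congr_ae (Filter.Eventually.of_forall hintegrand),
    integral_cexp_neg_mul_sq_norm_add_inner_add_inner_mul_I Real.two_pi_pos,
    norm_mul, Complex.norm_real, Complex.norm_exp_ofReal_add_ofReal_mul_I, Real.norm_of_nonneg (by positivity),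
    finrank_euclideanSpace_fin, div_mul_cancel_right₀ Real.pi_ne_zero,
    Real.inv_rpow zero_le_two, ← Real.rpow_neg zero_le_two, neg_div]
  congr 2
  simp only [norm_smul, mul_pow, norm_sub_sq_real, norm_add_sq_real,
    Real.norm_of_nonneg Real.two_pi_pos.le]
  field_simp
  ring

theorem gabor_matrix_hermite_semigroup_general
    (ϑ : ℝ)
    (z w : EuclideanSpace ℝ (Fin d) × EuclideanSpace ℝ (Fin d)) :
    ‖∫ s, hermiteSemigroup ϑ (tfShift z gaussWin) s * (starRingEnd ℂ) (tfShift w gaussWin s)‖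
      = (2 : ℝ) ^ (-(d : ℝ) / 2) * Real.exp (-(d : ℝ) * ϑ / 2) *
          Real.exp (-(π / 4) * (1 + Real.exp (-ϑ)) *
            (‖z.1 - w.1‖ ^ 2 + ‖z.2 - w.2‖ ^ 2)) *
          Real.exp (-(π / 4) * (1 - Real.exp (-ϑ)) *
            (‖z.1 + w.1‖ ^ 2 + ‖z.2 + w.2‖ ^ 2)) := by
  simp only [hermiteSemigroup_tfShift_gaussWin, mul_assoc]
  rw [integral_const_mul, integral_const_mul, norm_mul, norm_mul, Complex.norm_real,
    Complex.norm_exp_ofReal_add_ofReal_mul_I, norm_integral_tfShift_gaussWin_mul_conj,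
    Real.norm_of_nonneg (Real.exp_pos _).le]
  simp only [Prod.smul_fst, Prod.smul_snd]
  have hexponent :
      -(π / 2) * ((1 - Real.exp (-ϑ) ^ 2) * (‖z.1‖ ^ 2 + ‖z.2‖ ^ 2)) +
          -(π / 2) * (‖Real.exp (-ϑ) • z.1 - w.1‖ ^ 2 + ‖Real.exp (-ϑ) • z.2 - w.2‖ ^ 2) =
        -(π / 4) * ((1 + Real.exp (-ϑ)) * (‖z.1 - w.1‖ ^ 2 + ‖z.2 - w.2‖ ^ 2)) +
          -(π / 4) * ((1 - Real.exp (-ϑ)) * (‖z.1 + w.1‖ ^ 2 + ‖z.2 + w.2‖ ^ 2)) := by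
    simp only [norm_sub_sq_real, norm_add_sq_real, norm_smul, mul_pow, real_inner_smul_left,
      Real.norm_of_nonneg (Real.exp_pos _).le]
    ring
  rw [← Real.exp_add, ← hexponent, Real.exp_add]
  ring

/-- **Modulus of the Gabor matrix of the Hermite semigroup.** For `ϑ ≥ 0` and all
`z, w ∈ ℝ^{2d}`:
`|⟨R_ϑ π(z)g, π(w)g⟩| = 2^{−d/2} e^{−dϑ/2}
  exp(−(π/4)(1+e^{−ϑ})|z−w|²) exp(−(π/4)(1−e^{−ϑ})|z+w|²)`,
with `|z∓w|²` the squared Euclidean norm on `ℝ^{2d}`. -/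
theorem gabor_matrix_hermite_semigroup
    (hd : 1 ≤ d) (ϑ : ℝ) (hϑ : 0 ≤ ϑ)
    (z w : EuclideanSpace ℝ (Fin d) × EuclideanSpace ℝ (Fin d)) :
    ‖∫ s, hermiteSemigroup ϑ (tfShift z gaussWin) s * (starRingEnd ℂ) (tfShift w gaussWin s)‖
      = (2 : ℝ) ^ (-(d : ℝ) / 2) * Real.exp (-(d : ℝ) * ϑ / 2) *
          Real.exp (-(π / 4) * (1 + Real.exp (-ϑ)) *
            (‖z.1 - w.1‖ ^ 2 + ‖z.2 - w.2‖ ^ 2)) *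
          Real.exp (-(π / 4) * (1 - Real.exp (-ϑ)) *
            (‖z.1 + w.1‖ ^ 2 + ‖z.2 + w.2‖ ^ 2)) :=
  gabor_matrix_hermite_semigroup_general ϑ z w
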